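/- For every k ≥ 1, the hypercube Q_{2^k} has a Hamiltonian cycle C such that the translates of E(C) under some subgroup of Aut(Q_{2^k}) partition E(Q_{2^k}); in particular Q_{2^k} has an edge decomposition into Hamiltonian cycles. -/

import Mathlib

/-!
Suppose the vertices of `G` are listed as `f : ZMod M ≃ V` along a Hamiltonian cycle whose edges
`e_t = f t f (t + 1)` form a fundamental set for a group `S` of automorphisms. Then `G □ G` has
the same property. Its cycle snakes through the torus `ZMod M × ZMod M`: row `y` is run from
`x = 1 - y` to `x = -y`, where the cycle climbs to row `y + 1`. Its group is `S` acting diagonally,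
extended by the swap of the two factors. A horizontal edge `g • e_t × {g (f s)}` lies in the
`g`-translate of the new cycle when `t + s ≠ 0`; when `t + s = 0` it lies in the `g`-translate of
the swapped cycle, because the new cycle climbs along `e_t` in column `-t`. Vertical edges are
swapped horizontal ones. As `Q₂` is a 4-cycle and `Q_{2m} ≅ Q_m □ Q_m`, induction covers every
`Q_{2^k}`.
-/

open SimpleGraph

/-- `H` divides `G`: the edge set of `G` can be partitioned into edge sets of
subgraphs of `G`, each isomorphic to `H`. -/
def GraphDivides {α β : Type} (H : SimpleGraph α) (G : SimpleGraph β) : Prop :=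
  ∃ (ι : Type) (f : ι → G.Subgraph),
    (∀ i, Nonempty (H ≃g (f i).coe)) ∧
    ∀ e ∈ G.edgeSet, ∃! i, e ∈ (f i).edgeSet

/-- The `n`-dimensional hypercube graph. -/
def cube (n : ℕ) : SimpleGraph (Fin n → ZMod 2) where
  Adj x y := hammingDist x y = 1
  symm := ⟨fun x y (h : hammingDist x y = 1) => (hammingDist_comm y x).trans h⟩
  loopless := ⟨fun x h => by simp [hammingDist_self] at h⟩

open Equiv Function

namespace ZMod

variable {M : ℕ}

/-- Row `y` of the torus is traversed from `x = 1 - y` up to `x = -y`, where the snake turns into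
row `y + 1`. -/
def snakeSucc (p : ZMod M × ZMod M) : ZMod M × ZMod M :=
  if p.1 + p.2 = 0 then (p.1, p.2 + 1) else (p.1 + 1, p.2)

def snakeOfNat (M n : ℕ) : ZMod M × ZMod M :=
  ((n : ZMod M) + 1 - ((n / M : ℕ) : ZMod M), ((n / M : ℕ) : ZMod M))

lemma snakeOfNat_succ (n : ℕ) : snakeOfNat M (n + 1) = snakeSucc (snakeOfNat M n) := by
  have hsum : (snakeOfNat M n).1 + (snakeOfNat M n).2 = ((n + 1 : ℕ) : ZMod M) := by
    simp [snakeOfNat]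
  rw [snakeSucc, hsum]
  simp only [ZMod.natCast_eq_zero_iff, snakeOfNat, Nat.succ_div]
  split_ifs <;> ext <;> push_cast <;> ring

lemma snakeOfNat_mod (n : ℕ) : snakeOfNat M (n % (M * M)) = snakeOfNat M n := by
  rw [snakeOfNat, snakeOfNat, Nat.mod_mul_right_div_self, ← ZMod.natCast_mod (n % (M * M)),
    Nat.mod_mul_right_mod, ZMod.natCast_mod, ZMod.natCast_mod]

lemma snakeOfNat_val_natCast (n : ℕ) :
    snakeOfNat M (n : ZMod (M * M)).val = snakeOfNat M n := by
  rw [ZMod.val_natCast, snakeOfNat_mod]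

lemma snakeOfNat_surjective [NeZero M] : Surjective (snakeOfNat M) := by
  rintro ⟨x, y⟩
  refine ⟨(x + y - 1).val + y.val * M, ?_⟩
  have hdiv : ((x + y - 1).val + y.val * M) / M = y.val := by
    rw [Nat.add_mul_div_right _ _ (NeZero.pos M), Nat.div_eq_of_lt (ZMod.val_lt _), zero_add]
  simp [snakeOfNat, hdiv]

lemma snakeOfNat_val_bijective [NeZero M] :
    Bijective fun a : ZMod (M * M) => snakeOfNat M a.val := by
  refine (Fintype.bijective_iff_surjective_and_card _).2 ⟨fun p => ?_, by simp⟩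
  obtain ⟨n, rfl⟩ := snakeOfNat_surjective p
  exact ⟨n, snakeOfNat_val_natCast n⟩

noncomputable def snake (M : ℕ) [NeZero M] : ZMod (M * M) ≃ ZMod M × ZMod M :=
  Equiv.ofBijective _ snakeOfNat_val_bijective

lemma snake_add_one [NeZero M] (a : ZMod (M * M)) :
    snake M (a + 1) = snakeSucc (snake M a) := by
  have ha : a + 1 = ((a.val + 1 : ℕ) : ZMod (M * M)) := by simp
  simp only [snake, Equiv.ofBijective_apply, ha, snakeOfNat_val_natCast, snakeOfNat_succ]

end ZMod

namespace Sym2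

variable {α β : Type*}

lemma mem_map_equiv_image_iff {E : α ≃ β} {C : Set (Sym2 α)} {e : Sym2 β} :
    e ∈ Sym2.map E '' C ↔ Sym2.map E.symm e ∈ C := by
  constructor
  · rintro ⟨c, hc, rfl⟩
    simpa [Sym2.map_map] using hc
  · intro h
    exact ⟨_, h, by simp [Sym2.map_map]⟩

lemma mem_map_perm_image_iff {g : Perm α} {C : Set (Sym2 α)} {e : Sym2 α} :
    e ∈ Sym2.map g '' C ↔ Sym2.map ⇑g⁻¹ e ∈ C :=
  mem_map_equiv_image_iff

end Sym2

open ZMod Sym2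

namespace SimpleGraph

variable {V W : Type*}

def cycleEdges {M : ℕ} (f : ZMod M → V) : Set (Sym2 V) :=
  Set.range fun t => s(f t, f (t + 1))

def IsFundamentalEdgeSet (G : SimpleGraph V) (S : Subgroup (Perm V)) (C : Set (Sym2 V)) : Prop :=
  (∀ g ∈ S, ∀ x y, G.Adj x y ↔ G.Adj (g x) (g y)) ∧
    ∀ e ∈ G.edgeSet, ∃! g, g ∈ S ∧ e ∈ Sym2.map g '' C

def HasFundamentalHamiltonianCycle (G : SimpleGraph V) : Prop :=
  ∃ (M : ℕ) (f : ZMod M ≃ V), 3 ≤ M ∧ (∀ t, G.Adj (f t) (f (t + 1))) ∧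
    ∃ S, G.IsFundamentalEdgeSet S (cycleEdges f)

lemma existsUnique_mem_map_image_iff {S : Subgroup (Perm V)} {C : Set (Sym2 V)} {a : Perm V}
    (ha : a ∈ S) (e : Sym2 V) :
    (∃! g, g ∈ S ∧ Sym2.map a e ∈ Sym2.map g '' C) ↔
      ∃! g, g ∈ S ∧ e ∈ Sym2.map g '' C := by
  refine (Equiv.mulLeft a⁻¹).existsUnique_congr fun g => ?_
  rw [Equiv.coe_mulLeft, S.mul_mem_cancel_left (S.inv_mem ha), mem_map_perm_image_iff,
    mem_map_perm_image_iff, mul_inv_rev, inv_inv, Perm.coe_mul, ← Sym2.map_map]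

lemma cycleEdge_injective {M : ℕ} (hM : 3 ≤ M) {f : ZMod M → V} (hf : Injective f) :
    Injective fun t => s(f t, f (t + 1)) := by
  intro t u h
  rcases Sym2.eq_iff.1 h with ⟨h₁, -⟩ | ⟨h₁, h₂⟩
  · exact hf h₁
  · have h₁ := hf h₁
    have h₂ := hf h₂
    have : ((2 : ℕ) : ZMod M) = 0 := by push_cast; linear_combination h₂ - h₁
    have := Nat.le_of_dvd two_pos ((ZMod.natCast_eq_zero_iff 2 M).1 this)
    omega

lemma edges_cycleGraph_cycle (n : ℕ) :
    {e | e ∈ (cycleGraph.cycle n).edges} = Set.range fun t : Fin (n + 3) => s(t, t + 1) := by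
  ext e
  constructor
  · intro h
    induction e using Sym2.ind with | _ a b => ?_
    rcases (cycleGraph.cycle n).edges_subset_edgeSet h with hab | hab <;> dsimp only at hab
    · exact ⟨b, by rw [eq_add_of_sub_eq' hab, Sym2.eq_swap]⟩
    · exact ⟨a, by rw [eq_add_of_sub_eq' hab]⟩
  · rintro ⟨t, rfl⟩
    have ht := t.isLt
    refine (Walk.mk_mem_edges_iff_exists _).2 ⟨n + 2 - t, by simp; omega, ?_⟩
    rw [cycleGraph.getVert_cycle (by omega), cycleGraph.getVert_cycle (by omega), Sym2.eq_swap]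
    congr 1 <;> ext
    · simp only [show n + 3 - (n + 2 - (t : ℕ) + 1) = t by omega, Nat.mod_eq_of_lt ht]
    · simp only [show n + 3 - (n + 2 - (t : ℕ)) = t + 1 by omega, Fin.val_add_one]
      split_ifs with h
      · simp_all [Fin.ext_iff]
      · rw [Nat.mod_eq_of_lt (by simp_all [Fin.ext_iff]; omega)]

lemma exists_isHamiltonianCycle_edges_eq [DecidableEq V] {G : SimpleGraph V} {M : ℕ}
    (hM : 3 ≤ M) (f : ZMod M ≃ V) (hf : ∀ t, G.Adj (f t) (f (t + 1))) :
    ∃ (v : V) (C : G.Walk v v), C.IsHamiltonianCycle ∧ {e | e ∈ C.edges} = cycleEdges f := by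
  obtain ⟨n, rfl⟩ : ∃ n, M = n + 3 := ⟨M - 3, by omega⟩
  -- `ZMod (n + 3)` is `Fin (n + 3)` by definition, so `f` is defined on the vertices of the cycle.
  let φ : cycleGraph (n + 3) →g G :=
    ⟨f, fun {a b} hab => by
      rcases hab with hab | hab
      · rw [eq_add_of_sub_eq' hab]; exact (hf b).symm
      · rw [eq_add_of_sub_eq' hab]; exact hf a⟩
  have hcycle : (cycleGraph.cycle n).IsHamiltonianCycle :=
    Walk.isHamiltonianCycle_iff_isCycle_and_length_eq.2 ⟨cycleGraph.isCycle_cycle, by simp⟩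
  refine ⟨_, (cycleGraph.cycle n).map φ, hcycle.map f.bijective, ?_⟩
  calc {e | e ∈ ((cycleGraph.cycle n).map φ).edges}
      = Sym2.map φ '' {e | e ∈ (cycleGraph.cycle n).edges} := by ext; simp [Walk.edges_map]
    _ = cycleEdges f := by rw [edges_cycleGraph_cycle, ← Set.range_comp]; rfl

def prodDiag : Perm V →* Perm (V × V) where
  toFun g := prodCongr g g
  map_one' := rfl
  map_mul' _ _ := rfl

@[simp]
lemma prodDiag_apply (g : Perm V) (x : V × V) : prodDiag g x = (g x.1, g x.2) := rfl

def doubledSubgroup (S : Subgroup (Perm V)) : Subgroup (Perm (V × V)) where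
  carrier := {h | ∃ g ∈ S, h = prodDiag g ∨ h = prodDiag g * prodComm V V}
  one_mem' := ⟨1, S.one_mem, Or.inl (map_one _).symm⟩
  mul_mem' := by
    rintro _ _ ⟨g, hg, rfl | rfl⟩ ⟨g', hg', rfl | rfl⟩
    · exact ⟨g * g', S.mul_mem hg hg', Or.inl rfl⟩
    · exact ⟨g * g', S.mul_mem hg hg', Or.inr rfl⟩
    · exact ⟨g * g', S.mul_mem hg hg', Or.inr rfl⟩
    · exact ⟨g * g', S.mul_mem hg hg', Or.inl rfl⟩
  inv_mem' := by
    rintro _ ⟨g, hg, rfl | rfl⟩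
    · exact ⟨g⁻¹, S.inv_mem hg, Or.inl rfl⟩
    · exact ⟨g⁻¹, S.inv_mem hg, Or.inr rfl⟩

lemma adj_doubledSubgroup {G : SimpleGraph V} {S : Subgroup (Perm V)}
    (hS : ∀ g ∈ S, ∀ x y, G.Adj x y ↔ G.Adj (g x) (g y)) :
    ∀ h ∈ doubledSubgroup S, ∀ x y, (G □ G).Adj x y ↔ (G □ G).Adj (h x) (h y) := by
  rintro _ ⟨g, hg, rfl | rfl⟩ ⟨x₁, x₂⟩ ⟨y₁, y₂⟩ <;>
    simp [boxProd_adj, ← hS g hg, g.injective.eq_iff, or_comm]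

lemma boxProd_adj_snakeSucc {G : SimpleGraph V} {M : ℕ} {f : ZMod M → V}
    (hadj : ∀ t, G.Adj (f t) (f (t + 1))) (p : ZMod M × ZMod M) :
    (G □ G).Adj (Prod.map f f p) (Prod.map f f (snakeSucc p)) := by
  unfold snakeSucc
  split_ifs <;> simp [boxProd_adj, hadj]

section Snake

variable {M : ℕ} [NeZero M]

noncomputable def snakeProd (f : ZMod M ≃ V) : ZMod (M * M) ≃ V × V :=
  (snake M).trans (prodCongr f f)

lemma snakeProd_add_one (f : ZMod M ≃ V) (a : ZMod (M * M)) :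
    snakeProd f (a + 1) = Prod.map f f (snakeSucc (snake M a)) := by
  simp [snakeProd, snake_add_one]

lemma cycleEdges_snakeProd (f : ZMod M ≃ V) :
    cycleEdges (snakeProd f) =
      Set.range fun p => s(Prod.map f f p, Prod.map f f (snakeSucc p)) := by
  simp only [cycleEdges, snakeProd_add_one]
  exact (snake M).surjective.range_comp fun p => s(Prod.map f f p, Prod.map f f (snakeSucc p))

lemma horizontal_mem_cycleEdges_snakeProd_iff (f : ZMod M ≃ V) (hf : ∀ t, f t ≠ f (t + 1))
    (c : Sym2 V) (w : V) :
    c.map (·, w) ∈ cycleEdges (snakeProd f) ↔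
      ∃ t, s(f t, f (t + 1)) = c ∧ t + f.symm w ≠ 0 := by
  rw [cycleEdges_snakeProd]
  constructor
  · rintro ⟨⟨x, y⟩, h⟩
    induction c using Sym2.ind with | _ a b => ?_
    simp only [snakeSucc] at h
    split_ifs at h with hxy <;> simp at h
    · rcases h with ⟨⟨-, h₁⟩, -, h₂⟩ | ⟨⟨-, h₁⟩, -, h₂⟩ <;>
        exact absurd (h₁.trans h₂.symm) (hf y)
    · rcases h with ⟨⟨rfl, rfl⟩, rfl, -⟩ | ⟨⟨rfl, rfl⟩, rfl, -⟩
      · exact ⟨x, rfl, by simpa using hxy⟩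
      · exact ⟨x, Sym2.eq_swap, by simpa using hxy⟩
  · rintro ⟨t, rfl, ht⟩
    exact ⟨(t, f.symm w), by simp [snakeSucc, ht]⟩

lemma vertical_mem_cycleEdges_snakeProd_iff (f : ZMod M ≃ V) (hf : ∀ t, f t ≠ f (t + 1))
    (w : V) (c : Sym2 V) :
    c.map (w, ·) ∈ cycleEdges (snakeProd f) ↔
      ∃ t, s(f t, f (t + 1)) = c ∧ f.symm w + t = 0 := by
  rw [cycleEdges_snakeProd]
  constructor
  · rintro ⟨⟨x, y⟩, h⟩
    induction c using Sym2.ind with | _ a b => ?_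
    simp only [snakeSucc] at h
    split_ifs at h with hxy <;> simp at h
    · rcases h with ⟨⟨rfl, rfl⟩, -, rfl⟩ | ⟨⟨rfl, rfl⟩, -, rfl⟩
      · exact ⟨y, rfl, by simpa using hxy⟩
      · exact ⟨y, Sym2.eq_swap, by simpa using hxy⟩
    · rcases h with ⟨⟨h₁, -⟩, h₂, -⟩ | ⟨⟨h₁, -⟩, h₂, -⟩ <;>
        exact absurd (h₁.trans h₂.symm) (hf x)
  · rintro ⟨t, rfl, ht⟩
    exact ⟨(f.symm w, t), by simp [snakeSucc, ht]⟩

lemma horizontal_mem_image_prodDiag_iff (f : ZMod M ≃ V) (hf : ∀ t, f t ≠ f (t + 1))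
    (g : Perm V) (c : Sym2 V) (w : V) :
    c.map (·, w) ∈ Sym2.map (prodDiag g) '' cycleEdges (snakeProd f) ↔
      ∃ t, s(f t, f (t + 1)) = c.map ⇑g⁻¹ ∧ t + f.symm (g⁻¹ w) ≠ 0 := by
  rw [mem_map_perm_image_iff, ← horizontal_mem_cycleEdges_snakeProd_iff f hf]
  induction c using Sym2.ind
  rfl

lemma horizontal_mem_image_prodDiag_mul_prodComm_iff (f : ZMod M ≃ V)
    (hf : ∀ t, f t ≠ f (t + 1)) (g : Perm V) (c : Sym2 V) (w : V) :
    c.map (·, w) ∈ Sym2.map (prodDiag g * prodComm V V) '' cycleEdges (snakeProd f) ↔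
      ∃ t, s(f t, f (t + 1)) = c.map ⇑g⁻¹ ∧ f.symm (g⁻¹ w) + t = 0 := by
  rw [mem_map_perm_image_iff, ← vertical_mem_cycleEdges_snakeProd_iff f hf]
  induction c using Sym2.ind
  rfl

lemma existsUnique_horizontal_mem_image {G : SimpleGraph V} (hM : 3 ≤ M) (f : ZMod M ≃ V)
    (hadj : ∀ t, G.Adj (f t) (f (t + 1))) {S : Subgroup (Perm V)}
    (hS : ∀ e ∈ G.edgeSet, ∃! g, g ∈ S ∧ e ∈ Sym2.map g '' cycleEdges f)
    {c : Sym2 V} (hc : c ∈ G.edgeSet) (w : V) :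
    ∃! h, h ∈ doubledSubgroup S ∧
      c.map (·, w) ∈ Sym2.map h '' cycleEdges (snakeProd f) := by
  have hf t : f t ≠ f (t + 1) := (hadj t).ne
  obtain ⟨g, ⟨hg, hgc⟩, hg_unique⟩ := hS c hc
  obtain ⟨t, ht⟩ := mem_map_perm_image_iff.1 hgc
  have determined : ∀ g' ∈ S, ∀ t', s(f t', f (t' + 1)) = c.map ⇑g'⁻¹ →
      g' = g ∧ t' = t := by
    intro g' hg' t' ht'
    obtain rfl := hg_unique g' ⟨hg', mem_map_perm_image_iff.2 ⟨t', ht'⟩⟩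
    exact ⟨rfl, cycleEdge_injective hM f.injective (ht'.trans ht.symm)⟩
  by_cases h0 : f.symm (g⁻¹ w) + t = 0
  · refine ⟨prodDiag g * prodComm V V, ⟨⟨g, hg, Or.inr rfl⟩, ?_⟩, ?_⟩
    · exact (horizontal_mem_image_prodDiag_mul_prodComm_iff f hf g c w).2 ⟨t, ht, h0⟩
    rintro _ ⟨⟨g', hg', rfl | rfl⟩, hmem⟩
    · obtain ⟨t', ht', h'⟩ := (horizontal_mem_image_prodDiag_iff f hf g' c w).1 hmem
      obtain ⟨rfl, rfl⟩ := determined g' hg' t' ht'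
      exact absurd (by rwa [add_comm]) h'
    · obtain ⟨t', ht', -⟩ :=
        (horizontal_mem_image_prodDiag_mul_prodComm_iff f hf g' c w).1 hmem
      obtain ⟨rfl, rfl⟩ := determined g' hg' t' ht'
      rfl
  · refine ⟨prodDiag g, ⟨⟨g, hg, Or.inl rfl⟩, ?_⟩, ?_⟩
    · exact (horizontal_mem_image_prodDiag_iff f hf g c w).2 ⟨t, ht, by rwa [add_comm]⟩
    rintro _ ⟨⟨g', hg', rfl | rfl⟩, hmem⟩
    · obtain ⟨t', ht', -⟩ := (horizontal_mem_image_prodDiag_iff f hf g' c w).1 hmem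
      obtain ⟨rfl, rfl⟩ := determined g' hg' t' ht'
      rfl
    · obtain ⟨t', ht', h'⟩ :=
        (horizontal_mem_image_prodDiag_mul_prodComm_iff f hf g' c w).1 hmem
      obtain ⟨rfl, rfl⟩ := determined g' hg' t' ht'
      exact absurd h' h0

end Snake

theorem HasFundamentalHamiltonianCycle.boxProd_self {G : SimpleGraph V}
    (hG : G.HasFundamentalHamiltonianCycle) : (G □ G).HasFundamentalHamiltonianCycle := by
  obtain ⟨M, f, hM, hadj, S, hS_adj, hS⟩ := hG
  have : NeZero M := ⟨by omega⟩
  refine ⟨M * M, snakeProd f, by nlinarith, fun a => ?_, doubledSubgroup S,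
    adj_doubledSubgroup hS_adj, ?_⟩
  · rw [snakeProd_add_one]
    exact boxProd_adj_snakeSucc hadj _
  intro e he
  induction e using Sym2.ind with | _ x y => ?_
  obtain ⟨x₁, x₂⟩ := x
  obtain ⟨y₁, y₂⟩ := y
  rcases he with ⟨hx, rfl : x₂ = y₂⟩ | ⟨hx, rfl : x₁ = y₁⟩
  · exact existsUnique_horizontal_mem_image hM f hadj hS (G.mem_edgeSet.2 hx) x₂
  · have hswap : prodComm V V ∈ doubledSubgroup S := ⟨1, S.one_mem, Or.inr (by simp)⟩
    rw [← existsUnique_mem_map_image_iff hswap]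
    exact existsUnique_horizontal_mem_image hM f hadj hS (G.mem_edgeSet.2 hx) x₁

lemma cycleEdges_trans {M : ℕ} (f : ZMod M ≃ V) (E : V ≃ W) :
    cycleEdges (f.trans E) = Sym2.map E '' cycleEdges f := by
  simp [cycleEdges, ← Set.range_comp, Function.comp_def]

lemma IsFundamentalEdgeSet.map_iso {G : SimpleGraph V} {H : SimpleGraph W} (E : G ≃g H)
    {S : Subgroup (Perm V)} {C : Set (Sym2 V)} (hC : G.IsFundamentalEdgeSet S C) :
    H.IsFundamentalEdgeSet (S.map E.toEquiv.permCongrHom.toMonoidHom) (Sym2.map E '' C) := by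
  constructor
  · rintro _ ⟨g, hg, rfl⟩ x y
    change H.Adj x y ↔ H.Adj (E (g (E.symm x))) (E (g (E.symm y)))
    rw [E.map_adj_iff, ← hC.1 g hg, ← E.map_adj_iff, E.apply_symm_apply, E.apply_symm_apply]
  · intro e he
    refine (E.toEquiv.permCongr.existsUnique_congr fun g => ?_).1
      (hC.2 _ (E.symm.map_mem_edgeSet_iff.2 he))
    refine and_congr (by simp) ?_
    change _ ↔ e ∈ Sym2.map (E.toEquiv.permCongr g) '' (Sym2.map E.toEquiv '' C)
    rw [mem_map_equiv_image_iff, mem_map_equiv_image_iff, mem_map_equiv_image_iff]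
    have h : ⇑E.toEquiv.symm ∘ ⇑(E.toEquiv.permCongr g).symm =
        ⇑g.symm ∘ ⇑E.toEquiv.symm :=
      funext fun x => E.toEquiv.symm_apply_apply _
    rw [Sym2.map_map, Sym2.map_map, h]
    rfl

theorem HasFundamentalHamiltonianCycle.map_iso {G : SimpleGraph V} {H : SimpleGraph W}
    (E : G ≃g H) (hG : G.HasFundamentalHamiltonianCycle) : H.HasFundamentalHamiltonianCycle := by
  obtain ⟨M, f, hM, hadj, S, hS⟩ := hG
  refine ⟨M, f.trans E.toEquiv, hM, fun t => E.map_adj_iff.2 (hadj t),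
    S.map E.toEquiv.permCongrHom.toMonoidHom, ?_⟩
  rw [cycleEdges_trans]
  exact hS.map_iso E

theorem HasFundamentalHamiltonianCycle.exists_isHamiltonianCycle [DecidableEq V]
    {G : SimpleGraph V} (hG : G.HasFundamentalHamiltonianCycle) :
    ∃ (v : V) (C : G.Walk v v), C.IsHamiltonianCycle ∧
      ∃ S, G.IsFundamentalEdgeSet S {e | e ∈ C.edges} := by
  obtain ⟨M, f, hM, hadj, S, hS⟩ := hG
  obtain ⟨v, C, hC, hCe⟩ := exists_isHamiltonianCycle_edges_eq hM f hadj
  exact ⟨v, C, hC, S, hCe ▸ hS⟩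

lemma isFundamentalEdgeSet_bot {G : SimpleGraph V} {C : Set (Sym2 V)} (hC : G.edgeSet ⊆ C) :
    G.IsFundamentalEdgeSet ⊥ C := by
  refine ⟨fun g hg => by simp [Subgroup.mem_bot.1 hg],
    fun e he => ⟨1, ⟨one_mem _, ?_⟩, ?_⟩⟩
  · simpa using hC he
  · exact fun g hg => Subgroup.mem_bot.1 hg.1

end SimpleGraph

lemma hammingDist_append {β : Type*} [DecidableEq β] {m n : ℕ} (a c : Fin m → β)
    (b d : Fin n → β) :
    hammingDist (Fin.append a b) (Fin.append c d) = hammingDist a c + hammingDist b d := by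
  simp only [hammingDist, Finset.card_filter, Fin.sum_univ_add, Fin.append_left,
    Fin.append_right]

def boxProdCubeIso (m n : ℕ) : (cube m □ cube n) ≃g cube (m + n) where
  toEquiv := Fin.appendEquiv m n
  map_rel_iff' {x y} := by
    change hammingDist (Fin.append _ _) (Fin.append _ _) = 1 ↔ _
    rw [hammingDist_append, boxProd_adj]
    change _ ↔ hammingDist x.1 y.1 = 1 ∧ _ ∨ hammingDist x.2 y.2 = 1 ∧ _
    rw [← hammingDist_eq_zero, ← hammingDist_eq_zero]
    omega

def grayCodeFun : ZMod 4 → Fin 2 → ZMod 2 := ![![0, 0], ![0, 1], ![1, 1], ![1, 0]]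

noncomputable def grayCode : ZMod 4 ≃ (Fin 2 → ZMod 2) :=
  Equiv.ofBijective grayCodeFun ⟨by decide, by decide⟩

lemma hasFundamentalHamiltonianCycle_cube_two : (cube 2).HasFundamentalHamiltonianCycle := by
  have hadj : ∀ t, hammingDist (grayCodeFun t) (grayCodeFun (t + 1)) = 1 := by decide
  have hedges : ∀ a b, hammingDist a b = 1 →
      ∃ t, s(grayCodeFun t, grayCodeFun (t + 1)) = s(a, b) := by
    decide
  refine ⟨4, grayCode, by norm_num, hadj, ⊥, isFundamentalEdgeSet_bot fun e he => ?_⟩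
  induction e using Sym2.ind with | _ a b => exact hedges a b he

lemma hasFundamentalHamiltonianCycle_cube_two_pow {k : ℕ} (hk : 1 ≤ k) :
    (cube (2 ^ k)).HasFundamentalHamiltonianCycle := by
  induction k, hk using Nat.le_induction with
  | base => exact hasFundamentalHamiltonianCycle_cube_two
  | succ k _ ih =>
    rw [pow_succ, mul_two]
    exact ih.boxProd_self.map_iso (boxProdCubeIso _ _)

theorem cube_pow_two_fundamental_hamiltonian_cycle (k : ℕ) (hk : 1 ≤ k) :
    ∃ (v : Fin (2 ^ k) → ZMod 2) (C : (cube (2 ^ k)).Walk v v),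
      C.IsHamiltonianCycle ∧
      ∃ S : Subgroup (Equiv.Perm (Fin (2 ^ k) → ZMod 2)),
        (∀ g ∈ S, ∀ x y, (cube (2 ^ k)).Adj x y ↔ (cube (2 ^ k)).Adj (g x) (g y)) ∧
        ∀ e ∈ (cube (2 ^ k)).edgeSet,
          ∃! g : Equiv.Perm (Fin (2 ^ k) → ZMod 2),
            g ∈ S ∧ e ∈ Sym2.map g '' {e' | e' ∈ C.edges} :=
  (hasFundamentalHamiltonianCycle_cube_two_pow hk).exists_isHamiltonianCycle
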